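/- For b1, b2, b3 ∈ ℂ let B5_{b1,b2,b3} denote the ℂ-vector space with basis {L, W, x} equipped with the operations extending W(1,0) by x∘L = x, L∘x = (1/2)b1·L + b2·W + (1/2)x, x∘W = 0, W∘x = b1·W, x∘x = −(1/2)b1²·L + b3·W + (3/2)b1·x, [x,L] = 0, [x,W] = 0. Then: (i) B5_{b1,b2,b3} is a Gel'fand-Dorfman bialgebra containing W(1,0) as a subalgebra; (ii) B5_{b1,b2,b3} is equivalent to B5_{b1',b2',b3'} if and only if there exist c1, c2 ∈ ℂ and β ∈ ℂ* with b1 = β·b1' + c1, b2 = β·b2' − c2/2 and b3 = b1b2 − β²·b1'b2' + β²·b3'; (iii) consequently, every B5_{b1,b2,b3} is equivalent to B5_{0,0,0} or to B5_{0,0,1}, and B5_{0,0,0} is not equivalent to B5_{0,0,1}. -/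
import Mathlib


namespace GDExt

def IsNovikov {M : Type*} [AddCommGroup M] (mul : M → M → M) : Prop :=
  (∀ a b c, mul (mul a b) c - mul a (mul b c) = mul (mul b a) c - mul b (mul a c)) ∧
  ∀ a b c, mul (mul a b) c = mul (mul a c) b

def IsLieBracket {M : Type*} [AddCommGroup M] (br : M → M → M) : Prop :=
  (∀ a, br a a = 0) ∧ ∀ a b c, br a (br b c) = br (br a b) c + br b (br a c)

def IsGD {M : Type*} [AddCommGroup M] (mul br : M → M → M) : Prop :=
  IsNovikov mul ∧ IsLieBracket br ∧
  ∀ a b c, br a (mul b c) - br c (mul b a) + mul (br b a) c - mul (br b c) a - mul b (br a c) = 0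

variable {K : Type*} [Field K]
variable {A V : Type*} [AddCommGroup A] [Module K A] [AddCommGroup V] [Module K V]

/-- First component bilinear product of the unified product `A ♮ V`. -/
def uniMul (circ : A →ₗ[K] A →ₗ[K] A) (lA rA : A →ₗ[K] Module.End K V)
    (lV rV : V →ₗ[K] Module.End K A) (f : V →ₗ[K] V →ₗ[K] A)
    (st : V →ₗ[K] V →ₗ[K] V) : A × V → A × V → A × V :=
  fun p q =>
    (circ p.1 q.1 + lV p.2 q.1 + rV q.2 p.1 + f p.2 q.2,
     st p.2 q.2 + lA p.1 q.2 + rA q.1 p.2)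

/-- Bracket of the unified product `A ♮ V`. -/
def uniBr (brk : A →ₗ[K] A →ₗ[K] A) (tl : V →ₗ[K] A →ₗ[K] V) (tr : V →ₗ[K] A →ₗ[K] A)
    (hm : V →ₗ[K] V →ₗ[K] A) (vbr : V →ₗ[K] V →ₗ[K] V) : A × V → A × V → A × V :=
  fun p q =>
    (brk p.1 q.1 + tr p.2 q.1 - tr q.2 p.1 + hm p.2 q.2,
     vbr p.2 q.2 + tl p.2 q.1 - tl q.2 p.1)

end GDExt

namespace GDExt

/-- Equivalence of GD bialgebra structures on `ℂL ⊕ ℂW ⊕ ℂx` (coordinates `0 ↦ L`,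
`1 ↦ W`, `2 ↦ x`): a GD bialgebra isomorphism restricting to the identity on
`ℂL ⊕ ℂW`. -/
def GDequiv3 (m br m' br' : (Fin 3 → ℂ) → (Fin 3 → ℂ) → (Fin 3 → ℂ)) : Prop :=
  ∃ φ : (Fin 3 → ℂ) ≃ₗ[ℂ] (Fin 3 → ℂ),
    (∀ u v, φ (m u v) = m' (φ u) (φ v)) ∧
    (∀ u v, φ (br u v) = br' (φ u) (φ v)) ∧
    (∀ u : Fin 3 → ℂ, u 2 = 0 → φ u = u)

end GDExt

namespace GDExt

/-- The Novikov product of `B5_{b1,b2,b3}` in the basis `L = e0, W = e1, x = e2`. -/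
noncomputable def B5mul (b1 b2 b3 : ℂ) : (Fin 3 → ℂ) → (Fin 3 → ℂ) → (Fin 3 → ℂ) :=
  fun u v =>
    ![u 0 * v 0 + (1 / 2) * b1 * (u 0 * v 2) - (1 / 2) * b1 ^ 2 * (u 2 * v 2),
      b2 * (u 0 * v 2) + u 1 * v 0 + b1 * (u 1 * v 2) + b3 * (u 2 * v 2),
      (1 / 2) * (u 0 * v 2) + u 2 * v 0 + (3 / 2) * b1 * (u 2 * v 2)]

/-- The Lie bracket of `B5_{b1,b2,b3}` (identically zero). -/
def B5br : (Fin 3 → ℂ) → (Fin 3 → ℂ) → (Fin 3 → ℂ) :=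
  fun _ _ => 0

noncomputable def phiMap (c1 c2 β : ℂ) : (Fin 3 → ℂ) →ₗ[ℂ] (Fin 3 → ℂ) where
  toFun u := ![u 0 + c1 * u 2, u 1 + c2 * u 2, β * u 2]
  map_add' u v := by funext i; fin_cases i <;> simp <;> ring
  map_smul' r u := by funext i; fin_cases i <;> simp <;> ring

noncomputable def phiEquiv (c1 c2 β : ℂ) (hβ : β ≠ 0) : (Fin 3 → ℂ) ≃ₗ[ℂ] (Fin 3 → ℂ) :=
  LinearEquiv.ofLinear (phiMap c1 c2 β) (phiMap (-c1/β) (-c2/β) β⁻¹)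
    (by refine LinearMap.ext fun u => funext fun i => ?_
        fin_cases i <;> simp [phiMap] <;> field_simp <;> ring)
    (by refine LinearMap.ext fun u => funext fun i => ?_
        fin_cases i <;> simp [phiMap] <;> field_simp <;> ring)

lemma phiMul (c1 c2 β b1' b2' b3' : ℂ) (u v : Fin 3 → ℂ) :
    phiMap c1 c2 β (B5mul (β*b1'+c1) (β*b2'-c2/2)
        (((β*b1'+c1)*(β*b2'-c2/2)) - β^2*(b1'*b2') + β^2*b3') u v)
      = B5mul b1' b2' b3' (phiMap c1 c2 β u) (phiMap c1 c2 β v) := by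
  funext i; fin_cases i <;> simp [phiMap, B5mul] <;> ring

lemma backward (b1 b2 b3 b1' b2' b3' c1 c2 β : ℂ) (hβ : β ≠ 0)
    (h1 : b1 = β * b1' + c1) (h2 : b2 = β * b2' - c2 / 2)
    (h3 : b3 = b1 * b2 - β ^ 2 * (b1' * b2') + β ^ 2 * b3') :
    GDequiv3 (B5mul b1 b2 b3) B5br (B5mul b1' b2' b3') B5br := by
  subst h1 h2 h3
  refine ⟨phiEquiv c1 c2 β hβ, fun u v => phiMul c1 c2 β b1' b2' b3' u v,
    fun u v => by simp [B5br], fun u hu => ?_⟩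
  show phiMap c1 c2 β u = u
  funext i; fin_cases i <;> simp [phiMap, hu]

lemma forward (b1 b2 b3 b1' b2' b3' : ℂ)
    (h : GDequiv3 (B5mul b1 b2 b3) B5br (B5mul b1' b2' b3') B5br) :
    ∃ c1 c2 β : ℂ, β ≠ 0 ∧ b1 = β * b1' + c1 ∧ b2 = β * b2' - c2 / 2 ∧
      b3 = b1 * b2 - β ^ 2 * (b1' * b2') + β ^ 2 * b3' := by
  obtain ⟨φ, hm, -, hid⟩ := h
  set w := φ ![0, 0, 1] with hw
  have hβ : w 2 ≠ 0 := by
    intro h0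
    have h1 : φ w = w := hid w h0
    have h2 : (![0, 0, 1] : Fin 3 → ℂ) = w := φ.injective (by rw [h1, ← hw])
    rw [← h2] at h0; simp at h0
  have key : ∀ t : Fin 3 → ℂ, φ t = t + t 2 • (w - ![0, 0, 1]) := by
    intro t
    have h1 : φ (t - t 2 • ![0, 0, 1]) = t - t 2 • ![0, 0, 1] := by
      refine hid _ ?_; simp
    have h2 : φ t = φ (t - t 2 • ![0, 0, 1]) + t 2 • φ ![0, 0, 1] := by
      rw [← φ.map_smul, ← φ.map_add]; congr 1; abel
    rw [h2, h1, ← hw]; module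
  have E := hm ![1, 0, 0] ![0, 0, 1]
  rw [key, key, key] at E
  have F := hm ![0, 0, 1] ![0, 0, 1]
  rw [key, key] at F
  have E0 := congrFun E 0
  have E1 := congrFun E 1
  have F1 := congrFun F 1
  simp [B5mul] at E0 E1 F1
  have hw0 : Matrix.vecHead w = w 0 := rfl
  have hw1 : Matrix.vecHead (Matrix.vecTail w) = w 1 := rfl
  have hw2 : Matrix.vecHead (Matrix.vecTail (Matrix.vecTail w)) = w 2 := rfl
  simp only [hw0, hw1, hw2] at E0 E1 F1
  refine ⟨w 0, w 1, w 2, hβ, ?_, ?_, ?_⟩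
  · linear_combination 2 * E0
  · linear_combination E1
  · linear_combination F1 - b1 * E1 - (w 2 * b2' + w 1) * (2 * E0)

lemma isGD (b1 b2 b3 : ℂ) : IsGD (B5mul b1 b2 b3) B5br := by
  refine ⟨⟨fun a b c => ?_, fun a b c => ?_⟩, ⟨fun a => rfl, fun a b c => by simp [B5br]⟩,
    fun a b c => ?_⟩
  · funext i; fin_cases i <;> simp [B5mul] <;> ring
  · funext i; fin_cases i <;> simp [B5mul] <;> ring
  · funext i; fin_cases i <;> simp [B5mul, B5br]

lemma part1 (b1 b2 b3 : ℂ) : IsGD (B5mul b1 b2 b3) B5br ∧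
    ∀ u v : Fin 3 → ℂ, u 2 = 0 → v 2 = 0 →
      B5mul b1 b2 b3 u v = ![u 0 * v 0, u 1 * v 0, 0] ∧ B5br u v = 0 := by
  refine ⟨isGD b1 b2 b3, fun u v hu hv => ⟨?_, rfl⟩⟩
  funext i; fin_cases i <;> simp [B5mul, hu, hv]

lemma part2 (b1 b2 b3 b1' b2' b3' : ℂ) :
    GDequiv3 (B5mul b1 b2 b3) B5br (B5mul b1' b2' b3') B5br ↔
      ∃ c1 c2 β : ℂ, β ≠ 0 ∧ b1 = β * b1' + c1 ∧ b2 = β * b2' - c2 / 2 ∧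
        b3 = b1 * b2 - β ^ 2 * (b1' * b2') + β ^ 2 * b3' := by
  constructor
  · exact forward b1 b2 b3 b1' b2' b3'
  · rintro ⟨c1, c2, β, hβ, h1, h2, h3⟩
    exact backward b1 b2 b3 b1' b2' b3' c1 c2 β hβ h1 h2 h3

lemma part3 (b1 b2 b3 : ℂ) :
    GDequiv3 (B5mul b1 b2 b3) B5br (B5mul 0 0 0) B5br ∨
    GDequiv3 (B5mul b1 b2 b3) B5br (B5mul 0 0 1) B5br := by
  by_cases h : b3 = b1 * b2
  · left
    rw [part2]
    exact ⟨b1, -2 * b2, 1, one_ne_zero, by ring, by ring, by rw [h]; ring⟩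
  · right
    obtain ⟨β, hβ2⟩ := IsAlgClosed.exists_pow_nat_eq (b3 - b1 * b2) (n := 2) (by norm_num)
    have hβ : β ≠ 0 := by
      intro h0; rw [h0] at hβ2; simp at hβ2
      exact h (by linear_combination -hβ2)
    rw [part2]
    exact ⟨b1, -2 * b2, β, hβ, by ring, by ring, by linear_combination -hβ2⟩

lemma part4 : ¬ GDequiv3 (B5mul 0 0 0) B5br (B5mul 0 0 1) B5br := by
  rw [part2]
  rintro ⟨c1, c2, β, hβ, h1, h2, h3⟩
  apply hβ
  have : β ^ 2 = 0 := by linear_combination -h3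
  exact pow_eq_zero_iff (n := 2) (by norm_num) |>.mp this

/-- Case B5. -/
theorem caseB5 :
    (∀ b1 b2 b3 : ℂ, IsGD (B5mul b1 b2 b3) B5br ∧
      ∀ u v : Fin 3 → ℂ, u 2 = 0 → v 2 = 0 →
        B5mul b1 b2 b3 u v = ![u 0 * v 0, u 1 * v 0, 0] ∧
        B5br u v = 0) ∧
    (∀ b1 b2 b3 b1' b2' b3' : ℂ,
      GDequiv3 (B5mul b1 b2 b3) B5br (B5mul b1' b2' b3') B5br ↔
        ∃ c1 c2 β : ℂ, β ≠ 0 ∧ b1 = β * b1' + c1 ∧ b2 = β * b2' - c2 / 2 ∧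
          b3 = b1 * b2 - β ^ 2 * (b1' * b2') + β ^ 2 * b3') ∧
    (∀ b1 b2 b3 : ℂ,
      GDequiv3 (B5mul b1 b2 b3) B5br (B5mul 0 0 0) B5br ∨
      GDequiv3 (B5mul b1 b2 b3) B5br (B5mul 0 0 1) B5br) ∧
    ¬ GDequiv3 (B5mul 0 0 0) B5br (B5mul 0 0 1) B5br := by
  exact ⟨part1, part2, part3, part4⟩

end GDExt
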